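/- arXiv:1309.5977 — 2 statements merged into one kernel-verified Lean document; each statement's English description precedes it below -/
import Mathlib

section
/- Let μ and μ' be probability measures on K with μ ≪ μ' and μ' ≪ μ, and let β ≥ 1 be such that dμ/dμ' ≤ β almost everywhere. Let σ be a probability measure on K with σ ≪ μ and dσ/dμ ∈ L²(μ). Then ‖dσ/dμ' − 1‖_{L²(μ')} ≤ √β · ‖dσ/dμ − 1‖_{L²(μ)} + √(β − 1). -/
/-!
Write `f = dσ/dμ` and `g = dμ/dμ'`. By the chain rule `dσ/dμ' = f g`, so
`dσ/dμ' - 1 = (f - 1) g + (g - 1)` and Minkowski's inequality in `L²(μ')` splits the error in two.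
The first part is controlled by a change of measure,
`∫ ((f - 1) g)² dμ' = ∫ (f - 1)² g dμ ≤ β ∫ (f - 1)² dμ`;
the second is the χ²-divergence of `μ` from `μ'`, and `0 ≤ g ≤ β` gives `(g - 1)² ≤ 1 + (β - 2) g`,
whose `μ'`-integral is `β - 1` because `∫ g dμ' = 1`.
-/

namespace MeasureTheory

variable {α : Type*} {m : MeasurableSpace α} {ν : Measure α}

lemma sqrt_integral_sq_eq_toReal_eLpNorm {u : α → ℝ} (hu : AEStronglyMeasurable u ν) :
    Real.sqrt (∫ x, u x ^ 2 ∂ν) = (eLpNorm u 2 ν).toReal := by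
  rw [eLpNorm_eq_lintegral_rpow_enorm_toReal (by norm_num) (by norm_num),
    integral_eq_lintegral_of_nonneg_ae (.of_forall fun x => sq_nonneg _)
      (hu.aemeasurable.pow_const 2).aestronglyMeasurable]
  have hsq : ∀ x, ENNReal.ofReal (u x ^ 2) = ‖u x‖ₑ ^ (2 : ENNReal).toReal := by
    intro x
    rw [ENNReal.toReal_ofNat, ENNReal.rpow_two, ← ofReal_norm,
      ← ENNReal.ofReal_pow (norm_nonneg _), Real.norm_eq_abs, sq_abs]
  simp_rw [hsq]
  rw [← ENNReal.toReal_rpow, Real.sqrt_eq_rpow]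
  norm_num

lemma sqrt_integral_add_sq_le {u v : α → ℝ} (hu : MemLp u 2 ν) (hv : MemLp v 2 ν) :
    Real.sqrt (∫ x, (u x + v x) ^ 2 ∂ν) ≤
      Real.sqrt (∫ x, u x ^ 2 ∂ν) + Real.sqrt (∫ x, v x ^ 2 ∂ν) := by
  rw [sqrt_integral_sq_eq_toReal_eLpNorm (u := fun x => u x + v x) (hu.1.add hv.1),
    sqrt_integral_sq_eq_toReal_eLpNorm hu.1, sqrt_integral_sq_eq_toReal_eLpNorm hv.1,
    ← ENNReal.toReal_add hu.eLpNorm_ne_top hv.eLpNorm_ne_top]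
  exact ENNReal.toReal_mono (ENNReal.add_ne_top.mpr ⟨hu.eLpNorm_ne_top, hv.eLpNorm_ne_top⟩)
    (eLpNorm_add_le hu.1 hv.1 one_le_two)

namespace Measure

variable {μ : Measure α} {β : ℝ}

lemma toReal_rnDeriv_sub_one_ae_eq {σ : Measure α} [SigmaFinite σ] [SigmaFinite μ] [SigmaFinite ν]
    (hσμ : σ ≪ μ) :
    (fun x => (σ.rnDeriv ν x).toReal - 1) =ᵐ[ν] fun x =>
      ((σ.rnDeriv μ x).toReal - 1) * (μ.rnDeriv ν x).toReal + ((μ.rnDeriv ν x).toReal - 1) := by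
  filter_upwards [rnDeriv_mul_rnDeriv (κ := ν) hσμ] with x hx
  rw [← hx, Pi.mul_apply, ENNReal.toReal_mul]
  ring

lemma memLp_toReal_rnDeriv_of_ae_le [IsFiniteMeasure ν] (p : ENNReal)
    (hbd : ∀ᵐ x ∂ν, (μ.rnDeriv ν x).toReal ≤ β) :
    MemLp (fun x => (μ.rnDeriv ν x).toReal) p ν := by
  refine .of_bound (measurable_rnDeriv μ ν).ennreal_toReal.aestronglyMeasurable β ?_
  filter_upwards [hbd] with x hx
  rwa [Real.norm_of_nonneg ENNReal.toReal_nonneg]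

lemma integral_toReal_rnDeriv_sub_one_sq_le [IsProbabilityMeasure μ] [IsProbabilityMeasure ν]
    (hμν : μ ≪ ν)
    (hbd : ∀ᵐ x ∂ν, (μ.rnDeriv ν x).toReal ≤ β) :
    ∫ x, ((μ.rnDeriv ν x).toReal - 1) ^ 2 ∂ν ≤ β - 1 := by
  have hchord : ∀ᵐ x ∂ν,
      ((μ.rnDeriv ν x).toReal - 1) ^ 2 ≤ 1 + (β - 2) * (μ.rnDeriv ν x).toReal := by
    filter_upwards [hbd] with x hx
    nlinarith [(ENNReal.toReal_nonneg : 0 ≤ (μ.rnDeriv ν x).toReal)]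
  calc ∫ x, ((μ.rnDeriv ν x).toReal - 1) ^ 2 ∂ν
      ≤ ∫ x, (1 + (β - 2) * (μ.rnDeriv ν x).toReal) ∂ν :=
        integral_mono_of_nonneg (.of_forall fun x => sq_nonneg _)
          ((integrable_const 1).add (integrable_toReal_rnDeriv.const_mul _)) hchord
    _ = β - 1 := by
        rw [integral_add (integrable_const 1) (integrable_toReal_rnDeriv.const_mul _),
          integral_const_mul, integral_toReal_rnDeriv hμν]
        simp only [integral_const, probReal_univ, smul_eq_mul, mul_one]
        ring

variable [SigmaFinite μ] [SigmaFinite ν] {h : α → ℝ}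

lemma memLp_mul_toReal_rnDeriv (hμν : μ ≪ ν) (hbd : ∀ᵐ x ∂μ, (μ.rnDeriv ν x).toReal ≤ β)
    (hh : AEStronglyMeasurable h ν) (hh2 : MemLp h 2 μ) :
    MemLp (fun x => h x * (μ.rnDeriv ν x).toReal) 2 ν := by
  have hg : Measurable fun x => (μ.rnDeriv ν x).toReal :=
    (measurable_rnDeriv μ ν).ennreal_toReal
  refine (memLp_two_iff_integrable_sq (hh.mul hg.aestronglyMeasurable)).mpr ?_
  have hdom : Integrable (fun x => h x ^ 2 * (μ.rnDeriv ν x).toReal) μ := by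
    refine .mono' (hh2.integrable_sq.const_mul β)
      (((hh.mono_ac hμν).pow 2).mul hg.aestronglyMeasurable) ?_
    filter_upwards [hbd] with x hx
    rw [Real.norm_of_nonneg (by positivity), mul_comm β]
    exact mul_le_mul_of_nonneg_left hx (sq_nonneg _)
  convert (integrable_toReal_rnDeriv_mul_iff hμν).mpr hdom using 2 with x
  rw [Pi.mul_apply]
  ring

lemma integral_sq_mul_toReal_rnDeriv_le (hμν : μ ≪ ν)
    (hbd : ∀ᵐ x ∂μ, (μ.rnDeriv ν x).toReal ≤ β) (hh2 : Integrable (fun x => h x ^ 2) μ) :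
    ∫ x, (h x * (μ.rnDeriv ν x).toReal) ^ 2 ∂ν ≤ β * ∫ x, h x ^ 2 ∂μ := by
  have hchange : ∫ x, (h x * (μ.rnDeriv ν x).toReal) ^ 2 ∂ν =
      ∫ x, h x ^ 2 * (μ.rnDeriv ν x).toReal ∂μ := by
    rw [← integral_rnDeriv_smul hμν]
    congr 1 with x
    rw [smul_eq_mul]
    ring
  rw [hchange, ← integral_const_mul]
  refine integral_mono_of_nonneg (.of_forall fun x => by positivity) (hh2.const_mul β) ?_
  filter_upwards [hbd] with x hx
  rw [mul_comm β]
  exact mul_le_mul_of_nonneg_left hx (sq_nonneg _)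

end Measure

end MeasureTheory

open MeasureTheory

theorem l2_error_transfer_alt_general
    {d : ℕ}
    (μ μ' σ : Measure (EuclideanSpace ℝ (Fin d)))
    [IsProbabilityMeasure μ] [IsProbabilityMeasure μ'] [IsProbabilityMeasure σ]
    (hacc : μ ≪ μ')
    (β : ℝ)
    (hbd : ∀ᵐ x ∂μ', (μ.rnDeriv μ' x).toReal ≤ β)
    (hσac : σ ≪ μ)
    (hσL2 : MemLp (fun x => (σ.rnDeriv μ x).toReal) 2 μ) :
    Real.sqrt (∫ x, ((σ.rnDeriv μ' x).toReal - 1) ^ 2 ∂μ') ≤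
      Real.sqrt β * Real.sqrt (∫ x, ((σ.rnDeriv μ x).toReal - 1) ^ 2 ∂μ) +
        Real.sqrt (β - 1) := by
  set f := fun x => (σ.rnDeriv μ x).toReal
  set g := fun x => (μ.rnDeriv μ' x).toReal
  have hf1 : MemLp (fun x => f x - 1) 2 μ := hσL2.sub (memLp_const 1)
  have hf1_meas : AEStronglyMeasurable (fun x => f x - 1) μ' :=
    ((Measure.measurable_rnDeriv σ μ).ennreal_toReal.sub measurable_const).aestronglyMeasurable
  calc Real.sqrt (∫ x, ((σ.rnDeriv μ' x).toReal - 1) ^ 2 ∂μ')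
      = Real.sqrt (∫ x, ((f x - 1) * g x + (g x - 1)) ^ 2 ∂μ') := by
        congr 1
        exact integral_congr_ae ((Measure.toReal_rnDeriv_sub_one_ae_eq hσac).fun_comp (· ^ 2))
    _ ≤ Real.sqrt (∫ x, ((f x - 1) * g x) ^ 2 ∂μ') + Real.sqrt (∫ x, (g x - 1) ^ 2 ∂μ') :=
        sqrt_integral_add_sq_le
          (Measure.memLp_mul_toReal_rnDeriv hacc (hacc.ae_le hbd) hf1_meas hf1)
          ((Measure.memLp_toReal_rnDeriv_of_ae_le 2 hbd).sub (memLp_const 1))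
    _ ≤ Real.sqrt β * Real.sqrt (∫ x, (f x - 1) ^ 2 ∂μ) + Real.sqrt (β - 1) := by
        rw [← Real.sqrt_mul' _ (integral_nonneg fun x => sq_nonneg _)]
        exact add_le_add
          (Real.sqrt_le_sqrt (Measure.integral_sq_mul_toReal_rnDeriv_le hacc (hacc.ae_le hbd)
            hf1.integrable_sq))
          (Real.sqrt_le_sqrt (Measure.integral_toReal_rnDeriv_sub_one_sq_le hacc hbd))

/-- if `μ ≪ μ'` and `μ' ≪ μ` are probability measures on `K` with
`dμ/dμ' ≤ β` a.e. for some `β ≥ 1`, and `σ ≪ μ` has `dσ/dμ ∈ L²(μ)`, then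
`‖dσ/dμ' − 1‖_{L²(μ')} ≤ √β·‖dσ/dμ − 1‖_{L²(μ)} + √(β − 1)`. -/
theorem l2_error_transfer_alt
    {d : ℕ} (K : Set (EuclideanSpace ℝ (Fin d)))
    (hKcomp : IsCompact K) (hKconv : Convex ℝ K) (hKint : (interior K).Nonempty)
    (μ μ' σ : Measure (EuclideanSpace ℝ (Fin d)))
    [IsProbabilityMeasure μ] [IsProbabilityMeasure μ'] [IsProbabilityMeasure σ]
    (hμK : μ Kᶜ = 0) (hμ'K : μ' Kᶜ = 0) (hσK : σ Kᶜ = 0)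
    (hacc : μ ≪ μ') (hacc' : μ' ≪ μ)
    (β : ℝ) (hβ : 1 ≤ β)
    (hbd : ∀ᵐ x ∂μ', (μ.rnDeriv μ' x).toReal ≤ β)
    (hσac : σ ≪ μ)
    (hσL2 : MemLp (fun x => (σ.rnDeriv μ x).toReal) 2 μ) :
    Real.sqrt (∫ x, ((σ.rnDeriv μ' x).toReal - 1) ^ 2 ∂μ') ≤
      Real.sqrt β * Real.sqrt (∫ x, ((σ.rnDeriv μ x).toReal - 1) ^ 2 ∂μ) +
        Real.sqrt (β - 1) :=
  l2_error_transfer_alt_general μ μ' σ hacc β hbd hσac hσL2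
end

section
/- Suppose in addition that each cost function takes values in [0,1], i.e. ℓ_t : K → [0,1] for all t. Then for any probability measure p_U on K absolutely continuous with respect to μ_0 with D(p_U‖μ_0) < ∞, the expected regret satisfies Σ_{t=1}^T ∫_K ℓ_t dμ_{t−1} − Σ_{t=1}^T ∫_K ℓ_t dp_U ≤ η^{−1}·D(p_U‖μ_0) + T·η/8. -/
open MeasureTheory

/-- The probability measure on `K` with density `e^{-g(x)} / ∫_K e^{-g}` with respect to
Lebesgue measure. -/
noncomputable def gibbsMeasure {d : ℕ} (K : Set (EuclideanSpace ℝ (Fin d)))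
    (g : EuclideanSpace ℝ (Fin d) → ℝ) : Measure (EuclideanSpace ℝ (Fin d)) :=
  (volume.restrict K).withDensity
    (fun x => ENNReal.ofReal (Real.exp (-g x) / ∫ y in K, Real.exp (-g y)))

/-- The exponential-weights mixed strategy at time `t`: the probability measure on `K`
with density proportional to `exp(−(η·Σ_{s=1}^t ℓ_s(x) + R(x)))`. -/
noncomputable def ewMeasure {d : ℕ} (K : Set (EuclideanSpace ℝ (Fin d)))
    (ℓ : ℕ → EuclideanSpace ℝ (Fin d) → ℝ) (R : EuclideanSpace ℝ (Fin d) → ℝ)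
    (η : ℝ) (t : ℕ) : Measure (EuclideanSpace ℝ (Fin d)) :=
  gibbsMeasure K (fun x => η * ∑ i ∈ Finset.Icc 1 t, ℓ i x + R x)

/-- Kullback–Leibler divergence `D(p‖q) = ∫ log (dp/dq) dp`. -/
noncomputable def klDiv' {α : Type*} [MeasurableSpace α] (p q : Measure α) : ℝ :=
  ∫ x, Real.log ((p.rnDeriv q x).toReal) ∂p

/-! With `L_t = ∑_{s ≤ t} ℓ_s`, the potential `Φ_t = log ∫ e^{-η L_t} dμ₀` is the cumulant
generating function of `L_t` at `-η`. Since `μ_{t-1}` is `μ₀` tilted by `-η L_{t-1}`, the increment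
`Φ_t - Φ_{t-1}` is the cumulant generating function of `ℓ_t` under `μ_{t-1}`, which Hoeffding's
lemma bounds by `-η ∫ ℓ_t dμ_{t-1} + η²/8`. Summing gives `η ∑_t ∫ ℓ_t dμ_{t-1} ≤ -Φ_T + T η²/8`,
and the Donsker–Varadhan inequality `∫ F dp - log ∫ e^F dμ₀ ≤ D(p‖μ₀)` with `F = -η L_T` gives
`-Φ_T ≤ D(p_U‖μ₀) + η ∑_t ∫ ℓ_t dp_U`. -/

open Real ProbabilityTheory InformationTheory

section General

variable {α : Type*} [MeasurableSpace α] {μ p : Measure α}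

lemma cgf_le_of_mem_Icc [IsProbabilityMeasure μ] {X : α → ℝ} {a b : ℝ}
    (hm : AEMeasurable X μ) (hb : ∀ᵐ x ∂μ, X x ∈ Set.Icc a b) (t : ℝ) :
    cgf X μ t ≤ t * μ[X] + (b - a) ^ 2 * t ^ 2 / 8 := by
  have hcentered := (hasSubgaussianMGF_of_mem_Icc hm hb).cgf_le t
  have hshift : cgf (fun x => X x - μ[X]) μ t = cgf X μ t - t * μ[X] := by
    simp_rw [cgf, sub_eq_add_neg, mgf_add_const]
    rw [log_mul (mgf_pos (integrable_exp_mul_of_mem_Icc hm hb)).ne' (exp_pos _).ne', log_exp]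
    ring
  have hparam : ((‖b - a‖₊ / 2 : NNReal) ^ 2 : NNReal) = (b - a) ^ 2 / 4 := by
    push_cast
    rw [Real.norm_eq_abs, div_pow, sq_abs]
    norm_num
  rw [hshift, hparam] at hcentered
  linarith

lemma integral_sub_log_integral_exp_le_integral_llr [IsProbabilityMeasure μ]
    [IsProbabilityMeasure p] (hpμ : p ≪ μ) (hllr : Integrable (llr p μ) p) {F : α → ℝ}
    (hFp : Integrable F p) (hFμ : Integrable (fun x => exp (F x)) μ) :
    ∫ x, F x ∂p - log (∫ x, exp (F x) ∂μ) ≤ ∫ x, llr p μ x ∂p := by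
  have : IsProbabilityMeasure (μ.tilted F) := isProbabilityMeasure_tilted hFμ
  have hgibbs := integral_llr_add_sub_measure_univ_nonneg
    (hpμ.trans (absolutelyContinuous_tilted hFμ)) (integrable_llr_tilted_right hpμ hFp hllr hFμ)
  rw [integral_llr_tilted_right hpμ hFp hFμ hllr] at hgibbs
  simp only [probReal_univ] at hgibbs
  linarith

lemma cgf_tilted [NeZero μ] {f g : α → ℝ} {s : ℝ} (hf : Integrable (fun x => exp (f x)) μ)
    (hfg : Integrable (fun x => exp (f x + s * g x)) μ) :
    cgf g (μ.tilted f) s = log (∫ x, exp (f x + s * g x) ∂μ) - log (∫ x, exp (f x) ∂μ) := by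
  rw [cgf, mgf, integral_exp_tilted f (fun x => s * g x)]
  exact log_div (integral_exp_pos hfg).ne' (integral_exp_pos hf).ne'

lemma isProbabilityMeasure_tilted_of_ne_zero {f : α → ℝ} (h : μ.tilted f ≠ 0) :
    IsProbabilityMeasure (μ.tilted f) := by
  have : NeZero μ := ⟨fun hμ => h (by rw [hμ, tilted_zero_measure])⟩
  exact isProbabilityMeasure_tilted (not_not.1 fun hf => h (tilted_of_not_integrable hf))

lemma ae_sum_Icc_mem_Icc {ℓ : ℕ → α → ℝ} (hℓ : ∀ t, ∀ᵐ x ∂μ, ℓ t x ∈ Set.Icc (0 : ℝ) 1)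
    (T : ℕ) : ∀ᵐ x ∂μ, ∑ t ∈ Finset.Icc 1 T, ℓ t x ∈ Set.Icc (0 : ℝ) T := by
  filter_upwards [ae_all_iff.2 hℓ] with x hx
  refine ⟨Finset.sum_nonneg fun t _ => (hx t).1, ?_⟩
  simpa using Finset.sum_le_card_nsmul (Finset.Icc 1 T) (ℓ · x) 1 fun t _ => (hx t).2

section ExponentialWeights

variable [IsProbabilityMeasure μ] {ℓ : ℕ → α → ℝ} {η : ℝ}

lemma cgf_sum_Icc_succ_le (hℓm : ∀ t, AEMeasurable (ℓ t) μ)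
    (hℓ : ∀ t, ∀ᵐ x ∂μ, ℓ t x ∈ Set.Icc (0 : ℝ) 1) (T : ℕ) :
    cgf (fun x => ∑ t ∈ Finset.Icc 1 (T + 1), ℓ t x) μ (-η) ≤
      cgf (fun x => ∑ t ∈ Finset.Icc 1 T, ℓ t x) μ (-η) -
        η * ∫ x, ℓ (T + 1) x ∂(μ.tilted fun x => -η * ∑ t ∈ Finset.Icc 1 T, ℓ t x) +
          η ^ 2 / 8 := by
  have hint (T : ℕ) : Integrable (fun x => exp (-η * ∑ t ∈ Finset.Icc 1 T, ℓ t x)) μ :=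
    integrable_exp_mul_of_mem_Icc (Finset.aemeasurable_fun_sum _ fun t _ => hℓm t)
      (ae_sum_Icc_mem_Icc hℓ T)
  have hsplit (x : α) : -η * ∑ t ∈ Finset.Icc 1 (T + 1), ℓ t x =
      -η * ∑ t ∈ Finset.Icc 1 T, ℓ t x + -η * ℓ (T + 1) x := by
    rw [Finset.sum_Icc_succ_top (by omega), mul_add]
  have := isProbabilityMeasure_tilted (hint T)
  have hac := tilted_absolutelyContinuous μ fun x => -η * ∑ t ∈ Finset.Icc 1 T, ℓ t x
  have hoeffding := cgf_le_of_mem_Icc ((hℓm (T + 1)).mono_ac hac) (hac.ae_le (hℓ (T + 1))) (-η)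
  rw [cgf_tilted (hint T) (by simpa only [hsplit] using hint (T + 1))] at hoeffding
  simp only [cgf, mgf, hsplit]
  linarith

lemma mul_sum_integral_tilted_le (hℓm : ∀ t, AEMeasurable (ℓ t) μ)
    (hℓ : ∀ t, ∀ᵐ x ∂μ, ℓ t x ∈ Set.Icc (0 : ℝ) 1) (T : ℕ) :
    η * ∑ t ∈ Finset.Icc 1 T,
        ∫ x, ℓ t x ∂(μ.tilted fun x => -η * ∑ s ∈ Finset.Icc 1 (t - 1), ℓ s x) ≤
      -cgf (fun x => ∑ t ∈ Finset.Icc 1 T, ℓ t x) μ (-η) + T * η ^ 2 / 8 := by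
  induction T with
  | zero => simp [cgf_const]
  | succ T ih =>
    rw [Finset.sum_Icc_succ_top (by omega), mul_add, Nat.add_sub_cancel]
    have := cgf_sum_Icc_succ_le (η := η) hℓm hℓ T
    push_cast
    linarith

theorem tilted_regret_le [IsProbabilityMeasure p] (hpμ : p ≪ μ) (hllr : Integrable (llr p μ) p)
    (hℓm : ∀ t, AEMeasurable (ℓ t) μ) (hℓ : ∀ t, ∀ᵐ x ∂μ, ℓ t x ∈ Set.Icc (0 : ℝ) 1)
    (hη : 0 < η) (T : ℕ) :
    ∑ t ∈ Finset.Icc 1 T,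
        ∫ x, ℓ t x ∂(μ.tilted fun x => -η * ∑ s ∈ Finset.Icc 1 (t - 1), ℓ s x) -
      ∑ t ∈ Finset.Icc 1 T, ∫ x, ℓ t x ∂p ≤
      η⁻¹ * ∫ x, llr p μ x ∂p + T * η / 8 := by
  have hLm : AEMeasurable (fun x => ∑ t ∈ Finset.Icc 1 T, ℓ t x) μ :=
    Finset.aemeasurable_fun_sum _ fun t _ => hℓm t
  have hℓp (t : ℕ) : Integrable (ℓ t) p :=
    .of_mem_Icc 0 1 ((hℓm t).mono_ac hpμ) (hpμ.ae_le (hℓ t))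
  have hdv := integral_sub_log_integral_exp_le_integral_llr hpμ hllr
    ((integrable_finsetSum _ fun t _ => hℓp t).const_mul (-η))
    (integrable_exp_mul_of_mem_Icc hLm (ae_sum_Icc_mem_Icc hℓ T))
  rw [integral_const_mul, integral_finsetSum _ fun t _ => hℓp t] at hdv
  have hpot := mul_sum_integral_tilted_le (η := η) hℓm hℓ T
  have hmul : η * (∑ t ∈ Finset.Icc 1 T,
        ∫ x, ℓ t x ∂(μ.tilted fun x => -η * ∑ s ∈ Finset.Icc 1 (t - 1), ℓ s x) -
      ∑ t ∈ Finset.Icc 1 T, ∫ x, ℓ t x ∂p) ≤ ∫ x, llr p μ x ∂p + T * η ^ 2 / 8 := by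
    simp only [cgf, mgf] at hpot
    linarith
  calc _ ≤ η⁻¹ * (∫ x, llr p μ x ∂p + T * η ^ 2 / 8) := by
        rwa [← div_eq_inv_mul, le_div_iff₀' hη]
    _ = _ := by field_simp

end ExponentialWeights

end General

lemma ewMeasure_eq_tilted {d : ℕ} (K : Set (EuclideanSpace ℝ (Fin d)))
    (ℓ : ℕ → EuclideanSpace ℝ (Fin d) → ℝ) (R : EuclideanSpace ℝ (Fin d) → ℝ) (η : ℝ) (t : ℕ) :
    ewMeasure K ℓ R η t =
      (volume.restrict K).tilted fun x => -(η * ∑ i ∈ Finset.Icc 1 t, ℓ i x + R x) :=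
  rfl

lemma ewMeasure_eq_tilted_ewMeasure_zero {d : ℕ} {K : Set (EuclideanSpace ℝ (Fin d))}
    {ℓ : ℕ → EuclideanSpace ℝ (Fin d) → ℝ} {R : EuclideanSpace ℝ (Fin d) → ℝ} {η : ℝ}
    (h : ewMeasure K ℓ R η 0 ≠ 0) (t : ℕ) :
    ewMeasure K ℓ R η t =
      (ewMeasure K ℓ R η 0).tilted fun x => -η * ∑ i ∈ Finset.Icc 1 t, ℓ i x := by
  rw [ewMeasure_eq_tilted] at h ⊢
  rw [ewMeasure_eq_tilted, tilted_tilted (not_not.1 fun hR => h (tilted_of_not_integrable hR))]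
  congr with x
  simp only [Finset.Icc_eq_empty_of_lt one_pos, Finset.sum_empty, Pi.add_apply]
  ring

theorem exp_weights_regret_bound_general
    {d : ℕ} (T : ℕ) (K : Set (EuclideanSpace ℝ (Fin d)))
    (hKcomp : IsCompact K)
    (ℓ : ℕ → EuclideanSpace ℝ (Fin d) → ℝ) (R : EuclideanSpace ℝ (Fin d) → ℝ)
    (hℓmeas : ∀ t, Measurable (ℓ t))
    (hℓ01 : ∀ t, ∀ x ∈ K, ℓ t x ∈ Set.Icc (0 : ℝ) 1)
    (η : ℝ) (hη : 0 < η)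
    (pU : Measure (EuclideanSpace ℝ (Fin d))) [IsProbabilityMeasure pU]
    (hpUac : pU ≪ ewMeasure K ℓ R η 0)
    (hKLfin : Integrable
      (fun x => Real.log ((pU.rnDeriv (ewMeasure K ℓ R η 0) x).toReal)) pU) :
    (∑ t ∈ Finset.Icc 1 T, ∫ x, ℓ t x ∂(ewMeasure K ℓ R η (t - 1))) -
        (∑ t ∈ Finset.Icc 1 T, ∫ x, ℓ t x ∂pU) ≤
      η⁻¹ * klDiv' pU (ewMeasure K ℓ R η 0) + T * η / 8 := by
  have hμ₀ : ewMeasure K ℓ R η 0 ≠ 0 := fun h =>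
    IsProbabilityMeasure.ne_zero pU (Measure.absolutelyContinuous_zero_iff.1 (h ▸ hpUac))
  have : IsProbabilityMeasure (ewMeasure K ℓ R η 0) := isProbabilityMeasure_tilted_of_ne_zero hμ₀
  have hℓ₀ (t : ℕ) : ∀ᵐ x ∂(ewMeasure K ℓ R η 0), ℓ t x ∈ Set.Icc (0 : ℝ) 1 := by
    rw [ewMeasure_eq_tilted]
    filter_upwards [(tilted_absolutelyContinuous _ _).ae_le
      (ae_restrict_mem hKcomp.measurableSet)] with x hx using hℓ01 t x hx
  simp_rw [ewMeasure_eq_tilted_ewMeasure_zero hμ₀ (_ - 1)]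
  exact tilted_regret_le hpUac hKLfin (fun t => (hℓmeas t).aemeasurable) hℓ₀ hη T

/-- if in addition each cost function takes values in [0,1], then
`Σ_t ∫ ℓ_t dμ_{t−1} − Σ_t ∫ ℓ_t dp_U ≤ η⁻¹·D(p_U‖μ_0) + T·η/8`. -/
theorem exp_weights_regret_bound
    {d : ℕ} (T : ℕ) (K : Set (EuclideanSpace ℝ (Fin d)))
    (hKcomp : IsCompact K) (hKconv : Convex ℝ K) (hKint : (interior K).Nonempty)
    (hKpos : 0 < volume K)
    (ℓ : ℕ → EuclideanSpace ℝ (Fin d) → ℝ) (R : EuclideanSpace ℝ (Fin d) → ℝ)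
    (hℓmeas : ∀ t, Measurable (ℓ t)) (hRmeas : Measurable R)
    (hℓbdd : ∀ t, ∃ C, ∀ x ∈ K, |ℓ t x| ≤ C) (hRbdd : ∃ C, ∀ x ∈ K, |R x| ≤ C)
    (hℓ01 : ∀ t, ∀ x ∈ K, ℓ t x ∈ Set.Icc (0 : ℝ) 1)
    (η : ℝ) (hη : 0 < η)
    (pU : Measure (EuclideanSpace ℝ (Fin d))) [IsProbabilityMeasure pU]
    (hpUK : pU Kᶜ = 0)
    (hpUac : pU ≪ ewMeasure K ℓ R η 0)
    (hKLfin : Integrable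
      (fun x => Real.log ((pU.rnDeriv (ewMeasure K ℓ R η 0) x).toReal)) pU) :
    (∑ t ∈ Finset.Icc 1 T, ∫ x, ℓ t x ∂(ewMeasure K ℓ R η (t - 1))) -
        (∑ t ∈ Finset.Icc 1 T, ∫ x, ℓ t x ∂pU) ≤
      η⁻¹ * klDiv' pU (ewMeasure K ℓ R η 0) + T * η / 8 :=
  exp_weights_regret_bound_general T K hKcomp ℓ R hℓmeas hℓ01 η hη pU hpUac hKLfin
end
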